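/- Let F be a Frankenstein graph with partition {G1,...,Gm}. Then the auxiliary bipartite incidence graph G(F), whose vertex classes are the parts Gi and the vertices shared by at least two parts, with Gi adjacent to a shared vertex v if v ∈ V(Gi), is acyclic (a forest). -/

import Mathlib

/-! Colored graphs encoded as finite sets of (vertex pair, color) entries. -/

variable {V K : Type*} [DecidableEq V] [DecidableEq K]

/-- Uncolored edges of a colored graph. -/
def uedges (G : Finset (Sym2 V × K)) : Set (Sym2 V) := {e | ∃ c, (e, c) ∈ G}

/-- The underlying simple graph of a colored graph. -/
def graphOf (G : Finset (Sym2 V × K)) : SimpleGraph V :=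
  SimpleGraph.fromEdgeSet (uedges G)

/-- Vertex set of a colored graph. -/
def vertSet (G : Finset (Sym2 V × K)) : Set V := {v | ∃ p ∈ G, v ∈ p.1}

/-- Color set of a colored graph. -/
def colorSet (G : Finset (Sym2 V × K)) : Set K := {c | ∃ e, (e, c) ∈ G}

/-- A colored graph is simple: no loops, and no two edges on the same vertex pair. -/
def Simple (G : Finset (Sym2 V × K)) : Prop :=
  (∀ p ∈ G, ¬ p.1.IsDiag) ∧ ∀ p ∈ G, ∀ q ∈ G, p.1 = q.1 → p = q

/-- A colored graph is rainbow: all edges have pairwise distinct colors. -/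
def Rainbow (G : Finset (Sym2 V × K)) : Prop :=
  ∀ p ∈ G, ∀ q ∈ G, p.2 = q.2 → p = q

/-- The (uncolored) edges of `G` form a cycle. -/
def IsCycleSet (G : Finset (Sym2 V × K)) : Prop :=
  ∃ (u : V) (W : (graphOf G).Walk u u), W.IsCycle ∧ ∀ e, e ∈ uedges G ↔ e ∈ W.edges

/-- The (uncolored) edges of `G` form a path with terminals `s` and `t`. -/
def IsPathSet (G : Finset (Sym2 V × K)) (s t : V) : Prop :=
  ∃ W : (graphOf G).Walk s t, W.IsPath ∧ ∀ e, e ∈ uedges G ↔ e ∈ W.edges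

/-- A bad piece: an almost rainbow theta graph made of three rainbow paths sharing
their two terminals, with at least 6 vertices. -/
def IsBadPiece (G : Finset (Sym2 V × K)) : Prop :=
  Simple G ∧ (colorSet G).ncard = G.card - 1 ∧ 6 ≤ (vertSet G).ncard ∧
  ∃ s t : V, s ≠ t ∧ ∃ P : Fin 3 → Finset (Sym2 V × K),
    G = P 0 ∪ P 1 ∪ P 2 ∧
    (∀ i, IsPathSet (P i) s t ∧ Rainbow (P i)) ∧
    (∀ i j, i ≠ j → vertSet (P i) ∩ vertSet (P j) = {s, t}) ∧
    (∀ i j, i ≠ j → uedges (P i) ∩ uedges (P j) = ∅)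

/-- `G` contains a rainbow even cycle subgraph. -/
def ContainsRainbowEvenCycle (G : Finset (Sym2 V × K)) : Prop :=
  ∃ R ⊆ G, Simple R ∧ Rainbow R ∧ IsCycleSet R ∧ Even R.card

/-- A long rainbow odd cycle: a rainbow cycle of odd length at least 7. -/
def IsLongRainbowOddCycle (G : Finset (Sym2 V × K)) : Prop :=
  Simple G ∧ Rainbow G ∧ IsCycleSet G ∧ Odd G.card ∧ 7 ≤ G.card

/-- A rainbow tree: a rainbow, acyclic, connected colored graph. -/
def IsRainbowTree (G : Finset (Sym2 V × K)) : Prop :=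
  Simple G ∧ Rainbow G ∧ (graphOf G).IsAcyclic ∧
    ∀ u ∈ vertSet G, ∀ v ∈ vertSet G, (graphOf G).Reachable u v

/-- A Frankenstein partition: each part is a long rainbow odd cycle, a bad piece or a
rainbow tree; distinct parts share at most one vertex and have disjoint colors; the
rainbow trees are pairwise vertex-disjoint; and the union contains no rainbow even
cycle subgraph. -/
def IsFrankensteinPartition {m : ℕ} (parts : Fin m → Finset (Sym2 V × K)) : Prop :=
  (∀ i j, i ≠ j → Set.Subsingleton (vertSet (parts i) ∩ vertSet (parts j))) ∧
  (∀ i j, i ≠ j → Disjoint (colorSet (parts i)) (colorSet (parts j))) ∧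
  (∀ i, IsLongRainbowOddCycle (parts i) ∨ IsBadPiece (parts i) ∨ IsRainbowTree (parts i)) ∧
  (∀ i j, i ≠ j → IsRainbowTree (parts i) → IsRainbowTree (parts j) →
    vertSet (parts i) ∩ vertSet (parts j) = ∅) ∧
  ¬ ContainsRainbowEvenCycle (Finset.univ.biUnion parts)

/-- A Frankenstein graph: a colored graph admitting a Frankenstein partition. -/
def IsFrankenstein (G : Finset (Sym2 V × K)) : Prop :=
  ∃ (m : ℕ) (parts : Fin m → Finset (Sym2 V × K)),
    1 ≤ m ∧ G = Finset.univ.biUnion parts ∧ IsFrankensteinPartition parts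

/-- The auxiliary bipartite incidence graph of a partition: parts on one side, vertices
shared by at least two parts on the other. -/
def auxGraph {m : ℕ} (parts : Fin m → Finset (Sym2 V × K)) :
    SimpleGraph (Fin m ⊕ V) :=
  SimpleGraph.fromRel (fun a b =>
    match a, b with
    | Sum.inl i, Sum.inr v =>
        v ∈ vertSet (parts i) ∧ ∃ j, j ≠ i ∧ v ∈ vertSet (parts j)
    | _, _ => False)


/-!
A cycle in the incidence graph runs through distinct parts `G₁, …, G_k`, consecutive ones sharing
a vertex. Take such a cycle of minimal length: then non-consecutive parts are vertex-disjoint and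
consecutive ones meet only in the shared vertex. Any two vertices of a part are joined by a rainbow
path inside it, and if the part is not a tree there are such paths of both parities. In an odd
cycle the two arcs between the vertices have different parities. In a bad piece with paths
`A, B, C`, where the repeated colour sits on `A` and `B`, the cycles `A ∪ C` and `B ∪ C` are
rainbow, hence odd, and a vertex off one of them is reached through its ear `B` or `A`, entered
on the side avoiding the repeated colour. Since trees are pairwise disjoint, some part on the
cycle is not a tree; joining the parts by rainbow paths and fixing the parity inside that part
yields a rainbow even cycle, which a Frankenstein graph does not contain.
-/

open SimpleGraph

section ColoredGraph

variable {V K : Type*} {G H R : Finset (Sym2 V × K)} {u v x : V}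

lemma uedges_mono (h : G ⊆ H) : uedges G ⊆ uedges H := fun _ ⟨c, hc⟩ => ⟨c, h hc⟩

lemma vertSet_mono (h : G ⊆ H) : vertSet G ⊆ vertSet H := fun _ ⟨p, hp, hx⟩ => ⟨p, h hp, hx⟩

lemma Simple.mono (hH : Simple H) (h : G ⊆ H) : Simple G :=
  ⟨fun p hp => hH.1 p (h hp), fun p hp q hq => hH.2 p (h hp) q (h hq)⟩

lemma Rainbow.mono (hH : Rainbow H) (h : G ⊆ H) : Rainbow G :=
  fun p hp q hq => hH p (h hp) q (h hq)

lemma ContainsRainbowEvenCycle.mono (hG : ContainsRainbowEvenCycle G) (h : G ⊆ H) :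
    ContainsRainbowEvenCycle H :=
  let ⟨R, hR, hrest⟩ := hG; ⟨R, hR.trans h, hrest⟩

lemma odd_card_of_not_containsRainbowEvenCycle (hno : ¬ContainsRainbowEvenCycle G) (hS : Simple G)
    (hRG : R ⊆ G) (hR : Rainbow R) (hC : IsCycleSet R) : Odd R.card :=
  Nat.not_even_iff_odd.mp fun he => hno ⟨R, hRG, hS.mono hRG, hR, hC, he⟩

lemma mem_vertSet_of_mem_uedges {e : Sym2 V} (he : e ∈ uedges G) (hx : x ∈ e) :
    x ∈ vertSet G :=
  let ⟨c, hc⟩ := he; ⟨(e, c), hc, hx⟩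

lemma disjoint_uedges_of_subsingleton (hH : ∀ p ∈ H, ¬p.1.IsDiag)
    (h : (vertSet G ∩ vertSet H).Subsingleton) : Disjoint (uedges G) (uedges H) := by
  rw [Set.disjoint_left]
  rintro e heG ⟨c, hc⟩
  induction e using Sym2.ind with
  | _ a b =>
    refine hH _ hc (Sym2.mk_isDiag_iff.mpr (h ?_ ?_))
    · exact ⟨mem_vertSet_of_mem_uedges heG (Sym2.mem_mk_left a b), _, hc, Sym2.mem_mk_left a b⟩
    · exact ⟨mem_vertSet_of_mem_uedges heG (Sym2.mem_mk_right a b), _, hc, Sym2.mem_mk_right a b⟩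

lemma disjoint_of_disjoint_uedges (h : Disjoint (uedges G) (uedges H)) : Disjoint G H :=
  Finset.disjoint_left.mpr fun _ hpG hpH => Set.disjoint_left.mp h ⟨_, hpG⟩ ⟨_, hpH⟩

lemma graphOf_adj : (graphOf G).Adj u v ↔ s(u, v) ∈ uedges G ∧ u ≠ v :=
  fromEdgeSet_adj _

lemma graphOf_mono (h : G ⊆ H) : graphOf G ≤ graphOf H :=
  fromEdgeSet_mono (uedges_mono h)

lemma mem_uedges_of_mem_edges {W : (graphOf G).Walk u v} {e : Sym2 V} (he : e ∈ W.edges) :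
    e ∈ uedges G := by
  have := W.edges_subset_edgeSet he
  rw [graphOf, edgeSet_fromEdgeSet] at this
  exact this.1

lemma mem_vertSet_of_mem_support_tail {W : (graphOf G).Walk u v} (hx : x ∈ W.support.tail) :
    x ∈ vertSet G := by
  induction W with
  | nil => simp at hx
  | cons h p ih =>
    rw [Walk.support_cons, List.tail_cons, Walk.mem_support_iff] at hx
    rcases hx with rfl | hx
    · exact mem_vertSet_of_mem_uedges (graphOf_adj.mp h).1 (Sym2.mem_mk_right _ _)
    · exact ih hx

lemma mem_vertSet_of_mem_support {W : (graphOf G).Walk u v} (hx : x ∈ W.support) (hxv : x ≠ v) :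
    x ∈ vertSet G := by
  rw [← List.mem_reverse, ← Walk.support_reverse, Walk.mem_support_iff] at hx
  exact hx.elim (fun h => absurd h hxv) mem_vertSet_of_mem_support_tail

lemma mem_support_of_mem_vertSet {W : (graphOf G).Walk u v}
    (hW : ∀ e, e ∈ uedges G ↔ e ∈ W.edges) (hx : x ∈ vertSet G) : x ∈ W.support := by
  obtain ⟨p, hp, hxp⟩ := hx
  obtain ⟨y, hy⟩ := Sym2.mem_iff_exists.mp hxp
  exact W.fst_mem_support_of_mem_edges ((hW _).mp ⟨p.2, by rw [← hy]; exact hp⟩)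

lemma IsPathSet.symm (h : IsPathSet G u v) : IsPathSet G v u :=
  let ⟨W, hW, he⟩ := h
  ⟨W.reverse, hW.reverse, fun e => by rw [Walk.edges_reverse, List.mem_reverse]; exact he e⟩

lemma IsPathSet.left_mem (h : IsPathSet G u v) (huv : u ≠ v) : u ∈ vertSet G :=
  let ⟨W, _, _⟩ := h
  mem_vertSet_of_mem_support W.start_mem_support huv

lemma IsPathSet.right_mem (h : IsPathSet G u v) (huv : u ≠ v) : v ∈ vertSet G :=
  h.symm.left_mem huv.symm

lemma IsPathSet.not_isDiag (h : IsPathSet G u v) : ∀ p ∈ G, ¬p.1.IsDiag := by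
  obtain ⟨W, -, hW⟩ := h
  intro p hp
  exact not_isDiag_of_mem_edgeSet _ (W.edges_subset_edgeSet ((hW _).mp ⟨p.2, hp⟩))

section DecidableEq

variable [DecidableEq V] [DecidableEq K]

lemma uedges_union : uedges (G ∪ H) = uedges G ∪ uedges H := by
  ext e; simp [uedges, exists_or]

lemma vertSet_union : vertSet (G ∪ H) = vertSet G ∪ vertSet H := by
  ext x; simp [vertSet, or_and_right, exists_or]

lemma Rainbow.union (hG : Rainbow G) (hH : Rainbow H)
    (h : Disjoint (colorSet G) (colorSet H)) : Rainbow (G ∪ H) := by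
  have cross : ∀ p ∈ G, ∀ q ∈ H, p.2 ≠ q.2 := fun p hp q hq hpq =>
    Set.disjoint_left.mp h ⟨p.1, hp⟩ (hpq ▸ ⟨q.1, hq⟩)
  intro p hp q hq hpq
  rcases Finset.mem_union.mp hp with hp | hp <;> rcases Finset.mem_union.mp hq with hq | hq
  · exact hG p hp q hq hpq
  · exact absurd hpq (cross p hp q hq)
  · exact absurd hpq.symm (cross q hq p hp)
  · exact hH p hp q hq hpq

end DecidableEq

end ColoredGraph

namespace SimpleGraph.Walk

lemma IsPath.start_notMem_support_tail {V : Type*} {Γ : SimpleGraph V} {u v : V}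
    {W : Γ.Walk u v} (hW : W.IsPath) : u ∉ W.support.tail := by
  have := hW.support_nodup
  rw [← W.cons_tail_support, List.nodup_cons] at this
  exact this.1

end SimpleGraph.Walk

section PathSets

variable {V K : Type*} [DecidableEq V] {G H : Finset (Sym2 V × K)} {s t u v w : V}

lemma isPathSet_filter {W : (graphOf G).Walk u v} (hW : W.IsPath) :
    IsPathSet (G.filter (·.1 ∈ W.edges)) u v := by
  have he : ∀ e, e ∈ uedges (G.filter (·.1 ∈ W.edges)) ↔ e ∈ W.edges := fun e =>
    ⟨fun ⟨_, hc⟩ => (Finset.mem_filter.mp hc).2, fun he =>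
      let ⟨c, hc⟩ := mem_uedges_of_mem_edges he; ⟨c, Finset.mem_filter.mpr ⟨hc, he⟩⟩⟩
  refine ⟨W.transfer _ fun e hW' => ?_, hW.transfer _,
    fun e => by rw [Walk.edges_transfer]; exact he e⟩
  rw [graphOf, edgeSet_fromEdgeSet]
  exact ⟨(he e).mpr hW', not_isDiag_of_mem_edgeSet _ (W.edges_subset_edgeSet hW')⟩

lemma vertSet_filter_subset (W : (graphOf G).Walk u v) :
    vertSet (G.filter (·.1 ∈ W.edges)) ⊆ {x | x ∈ W.support} := by
  rintro x ⟨p, hp, hx⟩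
  obtain ⟨y, hy⟩ := Sym2.mem_iff_exists.mp hx
  exact W.fst_mem_support_of_mem_edges (hy ▸ (Finset.mem_filter.mp hp).2)

lemma disjoint_filter_filter {l₁ l₂ : List (Sym2 V)} (h : l₁.Disjoint l₂) :
    Disjoint (G.filter (·.1 ∈ l₁)) (G.filter (·.1 ∈ l₂)) :=
  Finset.disjoint_filter.mpr fun _ _ h₁ h₂ => h h₁ h₂

variable [DecidableEq K]

lemma filter_union_filter_eq {l₁ l₂ : List (Sym2 V)} (he : ∀ e ∈ uedges G, e ∈ l₁ ++ l₂) :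
    G.filter (·.1 ∈ l₁) ∪ G.filter (·.1 ∈ l₂) = G := by
  rw [← Finset.filter_or]
  exact Finset.filter_true_of_mem fun p hp => List.mem_append.mp (he _ ⟨p.2, hp⟩)

lemma IsPathSet.exists_split (h : IsPathSet G s t) (hu : u ∈ vertSet G) :
    ∃ G₁ G₂, G₁ ∪ G₂ = G ∧ Disjoint G₁ G₂ ∧ IsPathSet G₁ s u ∧ IsPathSet G₂ u t ∧
      vertSet G₁ ∩ vertSet G₂ ⊆ {u} := by
  obtain ⟨W, hW, he⟩ := h
  have hu' := mem_support_of_mem_vertSet he hu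
  have hsplit := W.take_spec hu'
  have hedges : W.edges = (W.takeUntil u hu').edges ++ (W.dropUntil u hu').edges := by
    rw [← Walk.edges_append, hsplit]
  refine ⟨_, _, filter_union_filter_eq fun e h => hedges ▸ (he e).mp h,
    disjoint_filter_filter (List.disjoint_of_nodup_append (hedges ▸ hW.isTrail.edges_nodup)),
    isPathSet_filter (hW.takeUntil hu'), isPathSet_filter (hW.dropUntil hu'), ?_⟩
  rintro x ⟨h₁, h₂⟩
  by_contra hxu
  have hx₂ := ((Walk.mem_support_iff _).mp (vertSet_filter_subset _ h₂)).resolve_left hxu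
  have hnd := hW.support_nodup
  rw [← hsplit, Walk.support_append] at hnd
  exact List.disjoint_of_nodup_append hnd (vertSet_filter_subset _ h₁) hx₂

lemma IsCycleSet.exists_split (h : IsCycleSet G) (hu : u ∈ vertSet G) (hv : v ∈ vertSet G)
    (huv : u ≠ v) :
    ∃ G₁ G₂, G₁ ∪ G₂ = G ∧ Disjoint G₁ G₂ ∧ IsPathSet G₁ u v ∧ IsPathSet G₂ u v := by
  obtain ⟨w, W₀, hW₀, he₀⟩ := h
  have hu₀ := mem_support_of_mem_vertSet he₀ hu
  have he : ∀ e, e ∈ uedges G ↔ e ∈ (W₀.rotate u hu₀).edges := fun e =>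
    (he₀ e).trans (W₀.rotate_edges u hu₀).mem_iff.symm
  have hv₀ := mem_support_of_mem_vertSet he hv
  have hW := hW₀.rotate hu₀
  generalize W₀.rotate u hu₀ = W at he hv₀ hW
  obtain ⟨b, hadj, p, rfl⟩ := Walk.not_nil_iff.mp hW.not_nil
  have hp := ((Walk.cons_isCycle_iff p hadj).mp hW).1
  have hvp : v ∈ p.support :=
    (List.mem_cons.mp (Walk.support_cons hadj p ▸ hv₀)).resolve_left huv.symm
  have hW₁ : (Walk.cons hadj (p.takeUntil v hvp)).IsPath :=
    (Walk.cons_isPath_iff _ _).mpr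
      ⟨hp.takeUntil hvp, Walk.endpoint_notMem_support_takeUntil hp hvp huv⟩
  have hedges : (Walk.cons hadj p).edges =
      (Walk.cons hadj (p.takeUntil v hvp)).edges ++ (p.dropUntil v hvp).edges := by
    rw [Walk.edges_cons, Walk.edges_cons, List.cons_append, ← Walk.edges_append, p.take_spec]
  exact ⟨_, _, filter_union_filter_eq fun e h => hedges ▸ (he e).mp h,
    disjoint_filter_filter (List.disjoint_of_nodup_append (hedges ▸ hW.edges_nodup)),
    isPathSet_filter hW₁, (isPathSet_filter (hp.dropUntil hvp)).symm⟩

lemma IsPathSet.union (h₁ : IsPathSet G u v) (h₂ : IsPathSet H v w)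
    (h : vertSet G ∩ vertSet H ⊆ {v}) : IsPathSet (G ∪ H) u w := by
  obtain ⟨W₁, hW₁, he₁⟩ := h₁
  obtain ⟨W₂, hW₂, he₂⟩ := h₂
  refine ⟨(W₁.mapLe (graphOf_mono Finset.subset_union_left)).append
    (W₂.mapLe (graphOf_mono Finset.subset_union_right)), ?_, fun e => ?_⟩
  · rw [Walk.isPath_def, Walk.support_append, Walk.support_mapLe_eq_support,
      Walk.support_mapLe_eq_support, List.nodup_append]
    refine ⟨hW₁.support_nodup, hW₂.support_nodup.sublist (List.tail_sublist _), ?_⟩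
    rintro x hx₁ _ hx₂ rfl
    have hxv : x ≠ v := fun hxv => hW₂.start_notMem_support_tail (hxv ▸ hx₂)
    exact hxv (h ⟨mem_vertSet_of_mem_support hx₁ hxv, mem_vertSet_of_mem_support_tail hx₂⟩)
  · rw [Walk.edges_append, Walk.edges_mapLe_eq_edges, Walk.edges_mapLe_eq_edges, uedges_union,
      List.mem_append]
    exact or_congr (he₁ e) (he₂ e)

lemma IsPathSet.isCycleSet_union (h₁ : IsPathSet G u v) (h₂ : IsPathSet H v u) (huv : u ≠ v)
    (h : vertSet G ∩ vertSet H ⊆ {u, v}) (he : Disjoint (uedges G) (uedges H)) :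
    IsCycleSet (G ∪ H) := by
  obtain ⟨W₁, hW₁, he₁⟩ := h₁
  obtain ⟨W₂, hW₂, he₂⟩ := h₂
  refine ⟨u, (W₁.mapLe (graphOf_mono Finset.subset_union_left)).append
    (W₂.mapLe (graphOf_mono Finset.subset_union_right)), ?_, fun e => ?_⟩
  · rw [Walk.isCycle_def, Walk.isTrail_def, Walk.edges_append, Walk.edges_mapLe_eq_edges,
      Walk.edges_mapLe_eq_edges, Walk.tail_support_append, Walk.support_mapLe_eq_support,
      Walk.support_mapLe_eq_support, List.nodup_append, List.nodup_append]
    refine ⟨⟨hW₁.isTrail.edges_nodup, hW₂.isTrail.edges_nodup, ?_⟩, fun hnil => ?_,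
      hW₁.support_nodup.sublist (List.tail_sublist _),
      hW₂.support_nodup.sublist (List.tail_sublist _), ?_⟩
    · rintro e h₁ _ h₂ rfl
      exact Set.disjoint_left.mp he ((he₁ e).mpr h₁) ((he₂ e).mpr h₂)
    · have := congrArg Walk.length hnil
      rw [Walk.length_append, Walk.length_mapLe, Walk.length_nil] at this
      exact huv (Walk.eq_of_length_eq_zero (by omega : W₁.length = 0))
    · rintro x hx₁ _ hx₂ rfl
      rcases h ⟨mem_vertSet_of_mem_support_tail hx₁, mem_vertSet_of_mem_support_tail hx₂⟩
        with rfl | rfl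
      · exact hW₁.start_notMem_support_tail hx₁
      · exact hW₂.start_notMem_support_tail hx₂
  · rw [Walk.edges_append, Walk.edges_mapLe_eq_edges, Walk.edges_mapLe_eq_edges, uedges_union,
      List.mem_append]
    exact or_congr (he₁ e) (he₂ e)

end PathSets

section Connectors

variable {V K : Type*} [DecidableEq V] {G D B : Finset (Sym2 V × K)} {s t u v : V}

lemma IsRainbowTree.exists_rainbowPath (hG : IsRainbowTree G) (hu : u ∈ vertSet G)
    (hv : v ∈ vertSet G) : ∃ Q ⊆ G, IsPathSet Q u v ∧ Rainbow Q :=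
  let ⟨W⟩ := hG.2.2.2 u hu v hv
  ⟨_, Finset.filter_subset _ _, isPathSet_filter W.bypass_isPath,
    hG.2.1.mono (Finset.filter_subset _ _)⟩

variable [DecidableEq K]

lemma exists_rainbowPath_of_odd_cycle (hR : Rainbow G) (hC : IsCycleSet G) (hodd : Odd G.card)
    (hu : u ∈ vertSet G) (hv : v ∈ vertSet G) (huv : u ≠ v) (ε : ZMod 2) :
    ∃ Q ⊆ G, IsPathSet Q u v ∧ Rainbow Q ∧ (Q.card : ZMod 2) = ε := by
  obtain ⟨G₁, G₂, rfl, hdisj, h₁, h₂⟩ := hC.exists_split hu hv huv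
  have hsum : (G₁.card : ZMod 2) + G₂.card = 1 := by
    rw [← Nat.cast_add, ← Finset.card_union_of_disjoint hdisj, ZMod.natCast_eq_one_iff_odd]
    exact hodd
  by_cases hε : (G₁.card : ZMod 2) = ε
  · exact ⟨G₁, Finset.subset_union_left, h₁, hR.mono Finset.subset_union_left, hε⟩
  · refine ⟨G₂, Finset.subset_union_right, h₂, hR.mono Finset.subset_union_right, ?_⟩
    revert hsum hε
    generalize (G₁.card : ZMod 2) = a
    generalize (G₂.card : ZMod 2) = b
    revert a b ε
    decide

lemma exists_rainbowPath_of_odd_cycle_union (hR : Rainbow (D ∪ B)) (hD : IsCycleSet D)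
    (hodd : Odd D.card) (hB : IsPathSet B s v) (hu : u ∈ vertSet D) (hs : s ∈ vertSet D)
    (hus : u ≠ s) (hint : vertSet D ∩ vertSet B ⊆ {s}) (ε : ZMod 2) :
    ∃ Q ⊆ D ∪ B, IsPathSet Q u v ∧ Rainbow Q ∧ (Q.card : ZMod 2) = ε := by
  obtain ⟨Q, hQD, hQ, -, hQε⟩ := exists_rainbowPath_of_odd_cycle
    (hR.mono Finset.subset_union_left) hD hodd hu hs hus (ε - B.card)
  have hsub : Q ∪ B ⊆ D ∪ B := Finset.union_subset_union hQD subset_rfl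
  have hint' : vertSet Q ∩ vertSet B ⊆ {s} :=
    (Set.inter_subset_inter_left _ (vertSet_mono hQD)).trans hint
  have hdisj : Disjoint Q B := disjoint_of_disjoint_uedges
    (disjoint_uedges_of_subsingleton hB.not_isDiag (Set.subsingleton_singleton.anti hint'))
  refine ⟨Q ∪ B, hsub, hQ.union hB hint', hR.mono hsub, ?_⟩
  rw [Finset.card_union_of_disjoint hdisj, Nat.cast_add, hQε, sub_add_cancel]

/-- Split `B` at `v` and join the half avoiding `pb` to a path of suitable parity in `D`. -/
lemma exists_rainbowPath_of_mem_ear {pb : Sym2 V × K} (hD : IsCycleSet D) (hodd : Odd D.card)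
    (hB : IsPathSet B s t) (hst : s ≠ t) (hs : s ∈ vertSet D) (ht : t ∈ vertSet D)
    (hDB : vertSet D ∩ vertSet B ⊆ {s, t}) (hR : Rainbow ((D ∪ B).erase pb)) (hpb : pb ∉ D)
    (hu : u ∈ vertSet D) (hu' : u ∉ vertSet B) (hv : v ∈ vertSet B) (hv' : v ∉ vertSet D)
    (ε : ZMod 2) : ∃ Q ⊆ D ∪ B, IsPathSet Q u v ∧ Rainbow Q ∧ (Q.card : ZMod 2) = ε := by
  have hR' : ∀ B' ⊆ B, pb ∉ B' → Rainbow (D ∪ B') := fun B' hB' hpb' =>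
    hR.mono (Finset.subset_erase.mpr ⟨Finset.union_subset_union subset_rfl hB',
      fun h => (Finset.mem_union.mp h).elim hpb hpb'⟩)
  have hsB := hB.left_mem hst
  have htB := hB.right_mem hst
  obtain ⟨B₁, B₂, rfl, hdisj, hB₁, hB₂, hB₁₂⟩ := hB.exists_split hv
  have hvs : v ≠ s := fun h => hv' (h ▸ hs)
  have hvt : v ≠ t := fun h => hv' (h ▸ ht)
  have hint₁ : vertSet D ∩ vertSet B₁ ⊆ {s} := by
    rintro x ⟨hxD, hx⟩
    rcases hDB ⟨hxD, vertSet_mono Finset.subset_union_left hx⟩ with rfl | rfl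
    · rfl
    · exact absurd (hB₁₂ ⟨hx, hB₂.right_mem hvt⟩).symm hvt
  have hint₂ : vertSet D ∩ vertSet B₂ ⊆ {t} := by
    rintro x ⟨hxD, hx⟩
    rcases hDB ⟨hxD, vertSet_mono Finset.subset_union_right hx⟩ with rfl | rfl
    · exact absurd (hB₁₂ ⟨hB₁.left_mem hvs.symm, hx⟩).symm hvs
    · rfl
  by_cases hpb₁ : pb ∈ B₁
  · obtain ⟨Q, hQ, hrest⟩ := exists_rainbowPath_of_odd_cycle_union
      (hR' B₂ Finset.subset_union_right (Finset.disjoint_left.mp hdisj hpb₁)) hD hodd hB₂.symm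
      hu ht (fun h => hu' (h ▸ htB)) hint₂ ε
    exact ⟨Q, hQ.trans (Finset.union_subset_union subset_rfl Finset.subset_union_right), hrest⟩
  · obtain ⟨Q, hQ, hrest⟩ := exists_rainbowPath_of_odd_cycle_union
      (hR' B₁ Finset.subset_union_left hpb₁) hD hodd hB₁ hu hs (fun h => hu' (h ▸ hsB)) hint₁ ε
    exact ⟨Q, hQ.trans (Finset.union_subset_union subset_rfl Finset.subset_union_left), hrest⟩

lemma exists_rainbowPath_of_odd_cycle_ear {pb : Sym2 V × K} (hD : IsCycleSet D)
    (hodd : Odd D.card) (hB : IsPathSet B s t) (hst : s ≠ t) (hs : s ∈ vertSet D)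
    (ht : t ∈ vertSet D) (hDB : vertSet D ∩ vertSet B ⊆ {s, t}) (hR : Rainbow ((D ∪ B).erase pb))
    (hpb : pb ∉ D) (hu : u ∈ vertSet D) (hv : v ∈ vertSet (D ∪ B)) (huv : u ≠ v)
    (h : u ∉ vertSet B ∨ v ∈ vertSet D) (ε : ZMod 2) :
    ∃ Q ⊆ D ∪ B, IsPathSet Q u v ∧ Rainbow Q ∧ (Q.card : ZMod 2) = ε := by
  by_cases hvD : v ∈ vertSet D
  · obtain ⟨Q, hQ, hrest⟩ := exists_rainbowPath_of_odd_cycle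
      (hR.mono (Finset.subset_erase.mpr ⟨Finset.subset_union_left, hpb⟩)) hD hodd hu hvD huv ε
    exact ⟨Q, hQ.trans Finset.subset_union_left, hrest⟩
  rw [vertSet_union] at hv
  exact exists_rainbowPath_of_mem_ear hD hodd hB hst hs ht hDB hR hpb hu (h.resolve_right hvD)
    (hv.resolve_left hvD) hvD ε

lemma exists_rainbow_erase_of_ncard_colorSet (hG : G.Nonempty)
    (h : (colorSet G).ncard = G.card - 1) :
    ∃ pa ∈ G, ∃ pb ∈ G, pa ≠ pb ∧ pa.2 = pb.2 ∧ Rainbow (G.erase pa) ∧ Rainbow (G.erase pb) := by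
  have himage : (G.image Prod.snd).card = G.card - 1 := by
    rw [← h, ← Set.ncard_coe_finset, Finset.coe_image]
    congr 1
    ext c
    exact ⟨fun ⟨p, hp, hc⟩ => ⟨p.1, hc ▸ hp⟩, fun ⟨e, he⟩ => ⟨(e, c), he, rfl⟩⟩
  have hrainbow : ∀ p ∈ G, ∀ q ∈ G, p ≠ q → p.2 = q.2 → Rainbow (G.erase q) := by
    intro p hp q hq hpq hc
    have : (G.erase q).image Prod.snd = G.image Prod.snd := by
      refine (Finset.image_subset_image (Finset.erase_subset _ _)).antisymm fun c hc' => ?_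
      obtain ⟨r, hr, rfl⟩ := Finset.mem_image.mp hc'
      by_cases hrq : r = q
      · exact Finset.mem_image.mpr ⟨p, Finset.mem_erase.mpr ⟨hpq, hp⟩, hrq ▸ hc⟩
      · exact Finset.mem_image_of_mem _ (Finset.mem_erase.mpr ⟨hrq, hr⟩)
    refine fun a ha b hb hab => Finset.card_image_iff.mp ?_ ha hb hab
    rw [this, himage, Finset.card_erase_of_mem hq]
  obtain ⟨pa, hpa, pb, hpb, hne, hc⟩ := Finset.exists_ne_map_eq_of_card_lt_of_maps_to
    (by rw [himage]; exact Nat.sub_lt (Finset.card_pos.mpr hG) one_pos)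
    (fun p hp => Finset.mem_image_of_mem Prod.snd hp)
  exact ⟨pa, hpa, pb, hpb, hne, hc, hrainbow pb hpb pa hpa hne.symm hc.symm,
    hrainbow pa hpa pb hpb hne hc⟩

/-- `A ∪ C` is a rainbow odd cycle with ear `B`. -/
lemma exists_rainbowPath_of_theta_of_mem {A B C : Finset (Sym2 V × K)} {pb : Sym2 V × K}
    (hS : Simple (A ∪ C ∪ B)) (hno : ¬ContainsRainbowEvenCycle (A ∪ C ∪ B))
    (hA : IsPathSet A s t) (hB : IsPathSet B s t) (hC : IsPathSet C s t) (hst : s ≠ t)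
    (hAB : vertSet A ∩ vertSet B ⊆ {s, t}) (hAC : vertSet A ∩ vertSet C ⊆ {s, t})
    (hBC : vertSet B ∩ vertSet C ⊆ {s, t}) (hAB' : Disjoint (uedges A) (uedges B))
    (hAC' : Disjoint (uedges A) (uedges C)) (hBC' : Disjoint (uedges B) (uedges C))
    (hpb : pb ∈ B) (hR : Rainbow ((A ∪ C ∪ B).erase pb)) (hu : u ∈ vertSet (A ∪ C))
    (hv : v ∈ vertSet (A ∪ C ∪ B)) (huv : u ≠ v) (h : u ∉ vertSet B ∨ v ∈ vertSet (A ∪ C))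
    (ε : ZMod 2) : ∃ Q ⊆ A ∪ C ∪ B, IsPathSet Q u v ∧ Rainbow Q ∧ (Q.card : ZMod 2) = ε := by
  have hpbA : pb ∉ A ∪ C := fun h => (Finset.mem_union.mp h).elim
    (fun h => Finset.disjoint_left.mp (disjoint_of_disjoint_uedges hAB') h hpb)
    (fun h => Finset.disjoint_left.mp (disjoint_of_disjoint_uedges hBC') hpb h)
  have hcyc := hA.isCycleSet_union hC.symm hst hAC hAC'
  have hodd := odd_card_of_not_containsRainbowEvenCycle hno hS Finset.subset_union_left
    (hR.mono (Finset.subset_erase.mpr ⟨Finset.subset_union_left, hpbA⟩)) hcyc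
  have hint : vertSet (A ∪ C) ∩ vertSet B ⊆ {s, t} := by
    rw [vertSet_union, Set.union_inter_distrib_right, Set.inter_comm (vertSet C)]
    exact Set.union_subset hAB hBC
  exact exists_rainbowPath_of_odd_cycle_ear hcyc hodd hB hst
    (vertSet_mono Finset.subset_union_right (hC.left_mem hst))
    (vertSet_mono Finset.subset_union_right (hC.right_mem hst)) hint hR hpbA hu hv huv h ε

lemma exists_rainbowPath_of_theta {A B C : Finset (Sym2 V × K)} {pa pb : Sym2 V × K}
    (hS : Simple (A ∪ B ∪ C)) (hno : ¬ContainsRainbowEvenCycle (A ∪ B ∪ C))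
    (hA : IsPathSet A s t) (hB : IsPathSet B s t) (hC : IsPathSet C s t) (hst : s ≠ t)
    (hAB : vertSet A ∩ vertSet B ⊆ {s, t}) (hAC : vertSet A ∩ vertSet C ⊆ {s, t})
    (hBC : vertSet B ∩ vertSet C ⊆ {s, t}) (hAB' : Disjoint (uedges A) (uedges B))
    (hAC' : Disjoint (uedges A) (uedges C)) (hBC' : Disjoint (uedges B) (uedges C))
    (hpa : pa ∈ A) (hpb : pb ∈ B) (hRa : Rainbow ((A ∪ B ∪ C).erase pa))
    (hRb : Rainbow ((A ∪ B ∪ C).erase pb)) (hu : u ∈ vertSet (A ∪ B ∪ C))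
    (hv : v ∈ vertSet (A ∪ B ∪ C)) (huv : u ≠ v) (ε : ZMod 2) :
    ∃ Q ⊆ A ∪ B ∪ C, IsPathSet Q u v ∧ Rainbow Q ∧ (Q.card : ZMod 2) = ε := by
  have hGA : A ∪ C ∪ B = A ∪ B ∪ C := Finset.union_right_comm _ _ _
  have hGB : B ∪ C ∪ A = A ∪ B ∪ C := by rw [Finset.union_right_comm, Finset.union_comm B A]
  have hcases : (u ∈ vertSet (A ∪ C) ∧ (u ∉ vertSet B ∨ v ∈ vertSet (A ∪ C))) ∨
      (u ∈ vertSet (B ∪ C) ∧ (u ∉ vertSet A ∨ v ∈ vertSet (B ∪ C))) := by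
    simp only [vertSet_union, Set.mem_union] at hu hv ⊢
    clear * - hu hv
    tauto
  rcases hcases with ⟨huD, h⟩ | ⟨huD, h⟩
  · rw [← hGA] at hS hno hRb hv ⊢
    exact exists_rainbowPath_of_theta_of_mem hS hno hA hB hC hst hAB hAC hBC hAB' hAC' hBC'
      hpb hRb huD hv huv h ε
  · rw [← hGB] at hS hno hRa hv ⊢
    exact exists_rainbowPath_of_theta_of_mem hS hno hB hA hC hst (Set.inter_comm _ _ ▸ hAB)
      hBC hAC hAB'.symm hBC' hAC' hpa hRa huD hv huv h ε

lemma IsBadPiece.exists_rainbowPath (hG : IsBadPiece G) (hno : ¬ContainsRainbowEvenCycle G)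
    (hu : u ∈ vertSet G) (hv : v ∈ vertSet G) (huv : u ≠ v) (ε : ZMod 2) :
    ∃ Q ⊆ G, IsPathSet Q u v ∧ Rainbow Q ∧ (Q.card : ZMod 2) = ε := by
  obtain ⟨hS, hcol, -, s, t, hst, P, rfl, hP, hPv, hPe⟩ := hG
  have hmem : ∀ p, p ∈ P 0 ∪ P 1 ∪ P 2 ↔ ∃ i, p ∈ P i := by
    intro p
    simp [Fin.exists_fin_succ]
  obtain ⟨pa, hpa, pb, hpb, hne, hc, hRa, hRb⟩ := exists_rainbow_erase_of_ncard_colorSet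
    (let ⟨p, hp, _⟩ := (hP 0).1.left_mem hst; ⟨p, (hmem p).mpr ⟨0, hp⟩⟩) hcol
  obtain ⟨a, hpa⟩ := (hmem pa).mp hpa
  obtain ⟨b, hpb⟩ := (hmem pb).mp hpb
  have hab : a ≠ b := by
    rintro rfl
    exact hne ((hP a).2 pa hpa pb hpb hc)
  obtain ⟨c, hca, hcb, hall⟩ : ∃ c, c ≠ a ∧ c ≠ b ∧ ∀ i, i = a ∨ i = b ∨ i = c := by
    clear * - hab
    revert a b
    decide
  have hperm : P 0 ∪ P 1 ∪ P 2 = P a ∪ P b ∪ P c := by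
    ext p
    rw [hmem]
    simp only [Finset.mem_union]
    constructor
    · rintro ⟨i, hi⟩
      rcases hall i with rfl | rfl | rfl <;> simp [hi]
    · rintro ((h | h) | h) <;> exact ⟨_, h⟩
  have hdisj : ∀ i j, i ≠ j → Disjoint (uedges (P i)) (uedges (P j)) := fun i j hij =>
    Set.disjoint_iff_inter_eq_empty.mpr (hPe i j hij)
  rw [hperm] at hS hno hRa hRb hu hv ⊢
  exact exists_rainbowPath_of_theta hS hno (hP a).1 (hP b).1 (hP c).1 hst (hPv a b hab).subset
    (hPv a c hca.symm).subset (hPv b c hcb.symm).subset (hdisj a b hab) (hdisj a c hca.symm)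
    (hdisj b c hcb.symm) hpa hpb hRa hRb hu hv huv ε

end Connectors

section IncidenceGraph

variable {V K : Type*} {m : ℕ} {parts : Fin m → Finset (Sym2 V × K)}

lemma auxGraph_adj_isLeft {a b : Fin m ⊕ V} (h : (auxGraph parts).Adj a b) :
    a.isLeft = !b.isLeft := by
  rw [auxGraph, fromRel_adj] at h
  rcases a with i | x <;> rcases b with j | y <;> simp_all

lemma mem_vertSet_of_auxGraph_adj {i : Fin m} {x : V}
    (h : (auxGraph parts).Adj (.inl i) (.inr x)) : x ∈ vertSet (parts i) := by
  rw [auxGraph, fromRel_adj] at h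
  exact h.2.elim (fun h => h.1) False.elim

lemma isLeft_getVert_auxGraph {x : V} {b : Fin m ⊕ V} (W : (auxGraph parts).Walk (.inr x) b)
    {n : ℕ} (hn : n ≤ W.length) : (W.getVert n).isLeft = n.bodd := by
  induction n with
  | zero => simp [Walk.getVert_zero]
  | succ n ih =>
    have h := auxGraph_adj_isLeft (W.adj_getVert_succ (i := n) (by omega))
    rw [Nat.bodd_succ, ← ih (by omega), h, Bool.not_not]

lemma exists_isCycle_auxGraph_inr [DecidableEq V] {a : Fin m ⊕ V} {W : (auxGraph parts).Walk a a}
    (hW : W.IsCycle) : ∃ (x : V) (W' : (auxGraph parts).Walk (.inr x) (.inr x)), W'.IsCycle := by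
  rcases a with i | x
  · have h := auxGraph_adj_isLeft (W.adj_getVert_succ (i := 0) (by
      have := hW.three_le_length; omega))
    rw [W.getVert_zero, Sum.isLeft_inl, zero_add] at h
    obtain ⟨x, hx⟩ : ∃ x, W.getVert 1 = .inr x := by
      cases h' : W.getVert 1 with
      | inl => simp [h'] at h
      | inr x => exact ⟨x, rfl⟩
    exact ⟨x, W.rotate _ (hx ▸ W.getVert_mem_support 1), hW.rotate _⟩
  · exact ⟨x, W, hW⟩

lemma exists_getVert_eq_auxGraph {x : V} (W : (auxGraph parts).Walk (.inr x) (.inr x))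
    (hW : 0 < W.length) : ∃ (k : ℕ) (I : ℕ → Fin m) (y : ℕ → V), W.length = 2 * k ∧
      (∀ t < k, W.getVert (2 * t + 1) = .inl (I t)) ∧ ∀ t ≤ k, W.getVert (2 * t) = .inr (y t) := by
  have hleft := fun n (hn : n ≤ W.length) => isLeft_getVert_auxGraph W hn
  obtain ⟨k, hk⟩ : ∃ k, W.length = 2 * k := by
    have h := hleft _ le_rfl
    rw [W.getVert_length, Sum.isLeft_inr] at h
    exact ⟨W.length.div2, by rw [← Nat.bodd_add_div2 W.length, ← h]; simp⟩
  obtain ⟨i₀, -⟩ : ∃ i, W.getVert 1 = .inl i := by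
    have h := hleft 1 hW
    cases h' : W.getVert 1 with
    | inl i => exact ⟨i, rfl⟩
    | inr => simp [h'] at h
  refine ⟨k, fun t => (W.getVert (2 * t + 1)).elim id fun _ => i₀,
    fun t => (W.getVert (2 * t)).elim (fun _ => x) id, hk, fun t ht => ?_, fun t ht => ?_⟩
  · have h := hleft (2 * t + 1) (by omega)
    cases h' : W.getVert (2 * t + 1) <;> simp_all
  · have h := hleft (2 * t) (by omega)
    cases h' : W.getVert (2 * t) <;> simp_all

end IncidenceGraph

section PartCycles

variable {V K : Type*} {m : ℕ} {parts : Fin m → Finset (Sym2 V × K)} {k : ℕ} {I : ℕ → Fin m}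
  {y : ℕ → V}

/-- A cycle `y 0, I 0, y 1, I 1, …, I (k-1), y k = y 0` in `auxGraph parts`, indexed by `ℕ`:
the parts `I t` and the vertices `y t` (`t < k`) are distinct, and part `I t` contains `y t` and
`y (t + 1)`. -/
structure IsPartCycle (parts : Fin m → Finset (Sym2 V × K)) (k : ℕ) (I : ℕ → Fin m)
    (y : ℕ → V) : Prop where
  two_le : 2 ≤ k
  injOn_part : Set.InjOn I (Set.Iio k)
  injOn_vertex : Set.InjOn y (Set.Iio k)
  closed : y k = y 0
  mem_left : ∀ t < k, y t ∈ vertSet (parts (I t))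
  mem_right : ∀ t < k, y (t + 1) ∈ vertSet (parts (I t))

lemma exists_isPartCycle_of_isCycle [DecidableEq V] {a : Fin m ⊕ V}
    {W : (auxGraph parts).Walk a a} (hW : W.IsCycle) : ∃ k I y, IsPartCycle parts k I y := by
  obtain ⟨x, W, hW⟩ := exists_isCycle_auxGraph_inr hW
  have hlen := hW.three_le_length
  obtain ⟨k, I, y, hk, hI, hy⟩ := exists_getVert_eq_auxGraph W (by omega)
  have hinj := hW.getVert_injOn'
  refine ⟨k, I, y, by omega, fun s hs t ht hst => ?_, fun s hs t ht hst => ?_, ?_,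
    fun t ht => ?_, fun t ht => ?_⟩
  · rw [Set.mem_Iio] at hs ht
    have := hinj (by simp only [Set.mem_ofPred_eq]; omega) (by simp only [Set.mem_ofPred_eq]; omega)
      ((hI s hs).trans ((congrArg Sum.inl hst).trans (hI t ht).symm))
    omega
  · rw [Set.mem_Iio] at hs ht
    have := hinj (by simp only [Set.mem_ofPred_eq]; omega) (by simp only [Set.mem_ofPred_eq]; omega)
      ((hy s (le_of_lt hs)).trans ((congrArg Sum.inr hst).trans (hy t (le_of_lt ht)).symm))
    omega
  · apply Sum.inr_injective
    rw [← hy k le_rfl, ← hy 0 (Nat.zero_le k), ← hk, W.getVert_length, Nat.mul_zero,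
      W.getVert_zero]
  · have h := W.adj_getVert_succ (i := 2 * t) (by omega)
    rw [hy t ht.le, hI t ht] at h
    exact mem_vertSet_of_auxGraph_adj h.symm
  · have h := W.adj_getVert_succ (i := 2 * t + 1) (by omega)
    rw [hI t ht, show 2 * t + 1 + 1 = 2 * (t + 1) by ring, hy (t + 1) ht] at h
    exact mem_vertSet_of_auxGraph_adj h

namespace IsPartCycle

lemma part_ne (hc : IsPartCycle parts k I y) {s t : ℕ} (hs : s < k) (ht : t < k) (hst : s ≠ t) :
    I s ≠ I t :=
  fun h => hst (hc.injOn_part hs ht h)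

lemma vertex_ne (hc : IsPartCycle parts k I y) {s t : ℕ} (hs : s < k) (ht : t < k) (hst : s ≠ t) :
    y s ≠ y t :=
  fun h => hst (hc.injOn_vertex hs ht h)

lemma rotate (hc : IsPartCycle parts k I y) (r : ℕ) :
    IsPartCycle parts k (fun t => I ((t + r) % k)) (fun t => y ((t + r) % k)) := by
  have hk : 0 < k := by have := hc.two_le; omega
  have hmod : ∀ t, (t + r) % k < k := fun t => Nat.mod_lt _ hk
  have hinj : ∀ s t, s < k → t < k → (s + r) % k = (t + r) % k → s = t := by
    intro s t hs ht h
    have := Nat.ModEq.add_right_cancel' r h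
    rwa [Nat.ModEq, Nat.mod_eq_of_lt hs, Nat.mod_eq_of_lt ht] at this
  have hsucc : ∀ j < k, y ((j + 1) % k) = y (j + 1) := by
    intro j hj
    rcases Nat.lt_or_ge (j + 1) k with h | h
    · rw [Nat.mod_eq_of_lt h]
    · rw [show j + 1 = k by omega, Nat.mod_self, hc.closed]
  refine ⟨hc.two_le, fun s hs t ht h => hinj s t hs ht (hc.injOn_part (hmod s) (hmod t) h),
    fun s hs t ht h => hinj s t hs ht (hc.injOn_vertex (hmod s) (hmod t) h), ?_,
    fun t _ => hc.mem_left _ (hmod t), fun t _ => ?_⟩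
  · rw [Nat.add_mod_left, zero_add]
  · have : (t + 1 + r) % k = ((t + r) % k + 1) % k := by
      rw [add_right_comm, Nat.add_mod (t + r) 1, Nat.add_mod ((t + r) % k) 1, Nat.mod_mod]
    rw [this, hsucc _ (hmod t)]
    exact hc.mem_right _ (hmod t)

lemma segment (hc : IsPartCycle parts k I y) {s e : ℕ} {w : V} (hse : s < e) (hek : e < k)
    (hws : w ∈ vertSet (parts (I s))) (hwe : w ∈ vertSet (parts (I e)))
    (hw : ∀ r, s < r → r ≤ e → y r ≠ w) :
    IsPartCycle parts (e - s + 1) (fun r => I (s + r))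
      (fun r => if r = 0 ∨ r = e - s + 1 then w else y (s + r)) := by
  refine ⟨by omega, fun a ha b hb h => ?_, fun a ha b hb h => ?_, by simp, fun r hr => ?_,
    fun r hr => ?_⟩
  · rw [Set.mem_Iio] at ha hb
    have := hc.injOn_part (show s + a < k by omega) (show s + b < k by omega) h
    omega
  · rw [Set.mem_Iio] at ha hb
    split_ifs at h with h₁ h₂ h₂
    · omega
    · exact absurd h.symm (hw _ (by omega) (by omega))
    · exact absurd h (hw _ (by omega) (by omega))
    · have := hc.injOn_vertex (show s + a < k by omega) (show s + b < k by omega) h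
      omega
  · rcases Nat.eq_zero_or_pos r with rfl | h
    · simpa using hws
    · rw [if_neg (by omega)]
      exact hc.mem_left _ (by omega)
  · by_cases h : r = e - s
    · rw [if_pos (Or.inr (by omega)), show s + r = e by omega]
      exact hwe
    · rw [if_neg (by omega), ← add_assoc]
      exact hc.mem_right _ (by omega)

lemma exists_shorter (hc : IsPartCycle parts k I y) {a b : ℕ} (hab : a + 1 < b) (hbk : b < k)
    (hend : ¬(a = 0 ∧ b = k - 1)) {w : V} (hwa : w ∈ vertSet (parts (I a)))
    (hwb : w ∈ vertSet (parts (I b))) :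
    ∃ k' < k, ∃ I' y', IsPartCycle parts k' I' y' := by
  by_cases hw : ∃ j, a < j ∧ j ≤ b ∧ y j = w
  · obtain ⟨j, haj, hjb, rfl⟩ := hw
    have hne : ∀ i, i < k → i ≠ j → y i ≠ y j := fun i hi hij => hc.vertex_ne hi (by omega) hij
    rcases Nat.lt_or_ge (a + 1) j with h | h
    · have hj := hc.mem_right (j - 1) (by omega)
      rw [Nat.sub_add_cancel (by omega)] at hj
      exact ⟨_, by omega, _, _, hc.segment (e := j - 1) (by omega) (by omega) hwa hj
        fun r _ _ => hne r (by omega) (by omega)⟩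
    · obtain rfl : j = a + 1 := by omega
      exact ⟨_, by omega, _, _, hc.segment hab hbk (hc.mem_left _ (by omega)) hwb
        fun r _ _ => hne r (by omega) (by omega)⟩
  · push Not at hw
    exact ⟨_, by omega, _, _, hc.segment (by omega) hbk hwa hwb hw⟩

end IsPartCycle

end PartCycles

section Frankenstein

variable {V K : Type*} [DecidableEq V] [DecidableEq K] {m : ℕ}
  {parts : Fin m → Finset (Sym2 V × K)} {k : ℕ} {I : ℕ → Fin m} {y : ℕ → V} {u v : V}

lemma containsRainbowEvenCycle_union {P Q : Finset (Sym2 V × K)} (hS : Simple (P ∪ Q))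
    (hP : IsPathSet P u v) (hQ : IsPathSet Q v u) (huv : u ≠ v) (hPR : Rainbow P)
    (hQR : Rainbow Q) (hvert : vertSet P ∩ vertSet Q ⊆ {u, v})
    (hedges : Disjoint (uedges P) (uedges Q)) (hcolors : Disjoint (colorSet P) (colorSet Q))
    (hpar : (P.card : ZMod 2) = Q.card) : ContainsRainbowEvenCycle (P ∪ Q) := by
  refine ⟨P ∪ Q, subset_rfl, hS, hPR.union hQR hcolors,
    hP.isCycleSet_union hQ huv hvert hedges, ?_⟩
  rw [← ZMod.natCast_eq_zero_iff_even, Finset.card_union_of_disjoint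
    (disjoint_of_disjoint_uedges hedges), Nat.cast_add, hpar, ZModModule.add_self]

namespace IsFrankensteinPartition

lemma simple (h : IsFrankensteinPartition parts) (i : Fin m) : Simple (parts i) := by
  rcases h.2.2.1 i with hi | hi | hi
  exacts [hi.1, hi.1, hi.1]

lemma disjoint_uedges (h : IsFrankensteinPartition parts) {i j : Fin m} (hij : i ≠ j) :
    Disjoint (uedges (parts i)) (uedges (parts j)) :=
  disjoint_uedges_of_subsingleton (h.simple j).1 (h.1 i j hij)

lemma simple_biUnion (h : IsFrankensteinPartition parts) :
    Simple (Finset.univ.biUnion parts) := by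
  refine ⟨fun p hp => ?_, fun p hp q hq hpq => ?_⟩
  · obtain ⟨i, -, hi⟩ := Finset.mem_biUnion.mp hp
    exact (h.simple i).1 p hi
  · obtain ⟨i, -, hi⟩ := Finset.mem_biUnion.mp hp
    obtain ⟨j, -, hj⟩ := Finset.mem_biUnion.mp hq
    obtain rfl : i = j := by
      by_contra hij
      exact Set.disjoint_left.mp (h.disjoint_uedges hij) ⟨p.2, hi⟩ ⟨q.2, hpq ▸ hj⟩
    exact (h.simple i).2 p hi q hj hpq

lemma disjoint_uedges_of_forall_mem (h : IsFrankensteinPartition parts)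
    {P Q : Finset (Sym2 V × K)} {j : Fin m} (hP : ∀ p ∈ P, ∃ i ≠ j, p ∈ parts i)
    (hQ : Q ⊆ parts j) : Disjoint (uedges P) (uedges Q) :=
  Set.disjoint_left.mpr fun _ ⟨c, hc⟩ ⟨_, hc'⟩ =>
    let ⟨_, hij, hi⟩ := hP _ hc
    Set.disjoint_left.mp (h.disjoint_uedges hij) ⟨c, hi⟩ ⟨_, hQ hc'⟩

lemma disjoint_colorSet_of_forall_mem (h : IsFrankensteinPartition parts)
    {P Q : Finset (Sym2 V × K)} {j : Fin m} (hP : ∀ p ∈ P, ∃ i ≠ j, p ∈ parts i)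
    (hQ : Q ⊆ parts j) : Disjoint (colorSet P) (colorSet Q) :=
  Set.disjoint_left.mpr fun _ ⟨e, he⟩ ⟨_, he'⟩ =>
    let ⟨_, hij, hi⟩ := hP _ he
    Set.disjoint_left.mp (h.2.1 _ _ hij) ⟨e, hi⟩ ⟨_, hQ he'⟩

lemma not_containsRainbowEvenCycle (h : IsFrankensteinPartition parts) (i : Fin m) :
    ¬ContainsRainbowEvenCycle (parts i) :=
  fun hi => h.2.2.2.2 (hi.mono (Finset.subset_biUnion_of_mem parts (Finset.mem_univ i)))

lemma exists_rainbowPath_of_not_isRainbowTree (h : IsFrankensteinPartition parts) {i : Fin m}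
    (hi : ¬IsRainbowTree (parts i)) (hu : u ∈ vertSet (parts i)) (hv : v ∈ vertSet (parts i))
    (huv : u ≠ v) (ε : ZMod 2) :
    ∃ Q ⊆ parts i, IsPathSet Q u v ∧ Rainbow Q ∧ (Q.card : ZMod 2) = ε := by
  rcases h.2.2.1 i with hi' | hi' | hi'
  · exact exists_rainbowPath_of_odd_cycle hi'.2.1 hi'.2.2.1 hi'.2.2.2.1 hu hv huv ε
  · exact hi'.exists_rainbowPath (h.not_containsRainbowEvenCycle i) hu hv huv ε
  · exact absurd hi' hi

lemma exists_rainbowPath (h : IsFrankensteinPartition parts) (i : Fin m)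
    (hu : u ∈ vertSet (parts i)) (hv : v ∈ vertSet (parts i)) (huv : u ≠ v) :
    ∃ Q ⊆ parts i, IsPathSet Q u v ∧ Rainbow Q := by
  by_cases hi : IsRainbowTree (parts i)
  · exact hi.exists_rainbowPath hu hv
  · obtain ⟨Q, hQ, hQ', hQR, -⟩ := h.exists_rainbowPath_of_not_isRainbowTree hi hu hv huv 0
    exact ⟨Q, hQ, hQ', hQR⟩

lemma exists_rainbowPath_chain (h : IsFrankensteinPartition parts)
    (hc : IsPartCycle parts k I y) {n : ℕ} (hn : n < k)
    (hint : ∀ s t, s < t → t < n → vertSet (parts (I s)) ∩ vertSet (parts (I t)) ⊆ {y t}) :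
    ∃ P ⊆ (Finset.range n).biUnion (fun t => parts (I t)), IsPathSet P (y 0) (y n) ∧
      Rainbow P := by
  induction n with
  | zero =>
    exact ⟨∅, Finset.empty_subset _, ⟨Walk.nil, Walk.IsPath.nil, by simp [uedges]⟩,
      fun _ h => absurd h (Finset.notMem_empty _)⟩
  | succ n ih =>
    obtain ⟨P, hPsub, hP, hPR⟩ := ih (by omega) fun s t hst htn => hint s t hst (by omega)
    obtain ⟨Q, hQsub, hQ, hQR⟩ := h.exists_rainbowPath (I n) (hc.mem_left n (by omega))
      (hc.mem_right n (by omega)) (hc.vertex_ne (by omega) hn (by omega))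
    have hP' : ∀ p ∈ P, ∃ s < n, p ∈ parts (I s) := fun p hp => by
      simpa using hPsub hp
    refine ⟨P ∪ Q, Finset.union_subset (fun p hp => ?_) (fun p hp => ?_), hP.union hQ ?_,
      hPR.union hQR (h.disjoint_colorSet_of_forall_mem (fun p hp => ?_) hQsub)⟩
    · obtain ⟨s, hs, hps⟩ := hP' p hp
      exact Finset.mem_biUnion.mpr ⟨s, Finset.mem_range.mpr (by omega), hps⟩
    · exact Finset.mem_biUnion.mpr ⟨n, Finset.self_mem_range_succ n, hQsub hp⟩
    · rintro x ⟨⟨p, hp, hxp⟩, hxQ⟩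
      obtain ⟨s, hs, hps⟩ := hP' p hp
      exact hint s n hs (by omega) ⟨⟨p, hps, hxp⟩, vertSet_mono hQsub hxQ⟩
    · obtain ⟨s, hs, hps⟩ := hP' p hp
      exact ⟨I s, hc.part_ne (by omega) (by omega) (by omega), hps⟩

lemma vertSet_inter_subset (h : IsFrankensteinPartition parts) (hc : IsPartCycle parts k I y)
    (hmin : ∀ k' < k, ∀ I' y', ¬IsPartCycle parts k' I' y') {s t : ℕ} (hst : s < t)
    (htk : t < k) (hend : ¬(s = 0 ∧ t = k - 1)) :
    vertSet (parts (I s)) ∩ vertSet (parts (I t)) ⊆ {y t} := by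
  intro x hx
  rcases Nat.lt_or_ge (s + 1) t with hst' | hst'
  · obtain ⟨k', hk', I', y', hc'⟩ := hc.exists_shorter hst' htk hend hx.1 hx.2
    exact absurd hc' (hmin k' hk' I' y')
  · obtain rfl : t = s + 1 := by omega
    exact h.1 _ _ (hc.part_ne (by omega) htk (by omega)) hx
      ⟨hc.mem_right s (by omega), hc.mem_left (s + 1) htk⟩

/-- The parts `I 0, …, I (k-2)` give a rainbow path from `y 0` to `y (k-1)`, which the last
part, not being a tree, closes up to a rainbow cycle of even length. -/
lemma false_of_minimal (h : IsFrankensteinPartition parts) (hc : IsPartCycle parts k I y)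
    (hmin : ∀ k' < k, ∀ I' y', ¬IsPartCycle parts k' I' y')
    (hlast : ¬IsRainbowTree (parts (I (k - 1)))) : False := by
  have hk := hc.two_le
  obtain ⟨P, hPsub, hP, hPR⟩ := h.exists_rainbowPath_chain hc (n := k - 1) (by omega)
    fun _ _ hst _ => h.vertSet_inter_subset hc hmin hst (by omega) (by omega)
  have hy₀ : y 0 ∈ vertSet (parts (I (k - 1))) := by
    simpa [Nat.sub_add_cancel (by omega : 1 ≤ k), hc.closed] using hc.mem_right (k - 1) (by omega)
  obtain ⟨Q, hQsub, hQ, hQR, hQpar⟩ := h.exists_rainbowPath_of_not_isRainbowTree hlast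
    (hc.mem_left (k - 1) (by omega)) hy₀ (hc.vertex_ne (by omega) (by omega) (by omega)) P.card
  have hP' : ∀ p ∈ P, ∃ s < k - 1, p ∈ parts (I s) := fun p hp => by simpa using hPsub hp
  have hP'' : ∀ p ∈ P, ∃ i ≠ I (k - 1), p ∈ parts i := fun p hp =>
    let ⟨s, hs, hps⟩ := hP' p hp
    ⟨I s, hc.part_ne (by omega) (by omega) (by omega), hps⟩
  have hvert : vertSet P ∩ vertSet Q ⊆ {y 0, y (k - 1)} := by
    rintro x ⟨⟨p, hp, hxp⟩, hxQ⟩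
    obtain ⟨s, hs, hps⟩ := hP' p hp
    have hx : x ∈ vertSet (parts (I s)) ∩ vertSet (parts (I (k - 1))) :=
      ⟨⟨p, hps, hxp⟩, vertSet_mono hQsub hxQ⟩
    rcases Nat.eq_zero_or_pos s with rfl | hs₀
    · exact Or.inl (h.1 _ _ (hc.part_ne (by omega) (by omega) (by omega)) hx
        ⟨hc.mem_left 0 (by omega), hy₀⟩)
    · exact Or.inr (h.vertSet_inter_subset hc hmin (by omega) (by omega) (by omega) hx)
  have hsub : P ∪ Q ⊆ Finset.univ.biUnion parts := Finset.union_subset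
    (hPsub.trans (Finset.biUnion_subset.mpr fun t _ =>
      Finset.subset_biUnion_of_mem parts (Finset.mem_univ _)))
    (hQsub.trans (Finset.subset_biUnion_of_mem parts (Finset.mem_univ _)))
  exact h.2.2.2.2 ((containsRainbowEvenCycle_union (h.simple_biUnion.mono hsub) hP hQ
    (hc.vertex_ne (by omega) (by omega) (by omega)) hPR hQR hvert
    (h.disjoint_uedges_of_forall_mem hP'' hQsub) (h.disjoint_colorSet_of_forall_mem hP'' hQsub)
    hQpar.symm).mono hsub)

/-- Rotate a shortest cycle so that a part which is not a tree comes last. -/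
lemma not_isPartCycle (h : IsFrankensteinPartition parts) (k : ℕ) (I : ℕ → Fin m) (y : ℕ → V) :
    ¬IsPartCycle parts k I y := by
  induction k using Nat.strong_induction_on generalizing I y with
  | _ k ih =>
    intro hc
    have hk := hc.two_le
    obtain ⟨t, ht, htree⟩ : ∃ t < k, ¬IsRainbowTree (parts (I t)) := by
      by_contra! hall
      have := h.2.2.2.1 _ _ (hc.part_ne (by omega) (by omega) zero_ne_one) (hall 0 (by omega))
        (hall 1 (by omega))
      exact this.subset ⟨hc.mem_right 0 (by omega), hc.mem_left 1 (by omega)⟩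
    refine h.false_of_minimal (hc.rotate (t + 1)) (fun k' hk' I' y' => ih k' hk' I' y') ?_
    rwa [show k - 1 + (t + 1) = t + k by omega, Nat.add_mod_right, Nat.mod_eq_of_lt ht]

end IsFrankensteinPartition

end Frankenstein

/-- For a Frankenstein graph with partition `parts`, the auxiliary
bipartite incidence graph is acyclic (a forest). -/
theorem frankenstein_auxGraph_isAcyclic {m : ℕ}
    (parts : Fin m → Finset (Sym2 V × K))
    (h : IsFrankensteinPartition parts) :
    (auxGraph parts).IsAcyclic := by
  intro a W hW
  obtain ⟨k, I, y, hc⟩ := exists_isPartCycle_of_isCycle hW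
  exact h.not_isPartCycle k I y hc
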